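/- For a purely atomic Lévy measure ν = Σ_{j≠M} κ^j·δ_{x^j} with κ^j ≥ 0, the double exponential tail function ψ(ν, x) (defined as ∫_{−∞}^x (e^x − e^z) ν(dz) for x < 0 and ∫_x^∞ (e^z − e^x) ν(dz) for x > 0) satisfies the Fourier identity: for all ξ ∈ ℝ, ∫_ℝ e^{−2πixξ} ψ(ν, x) dx · (−2π)(2πξ² + iξ) = Σ_{j≠M} κ^j·( e^{(1−2πiξ)x^j} − (1 − 2πiξ)e^{x^j} − 2πiξ ). -/

import Mathlib

/-!
Away from `0`, `ψ` is the `κ`-weighted sum of the tails of the Dirac masses `δ_{x^j}`, and the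
tail of `δ_a` is `e^y - e^a` on the interval between `a` and `0`, with sign. Its Fourier transform
is therefore the oriented integral `∫_a^0 e^{sy} (e^y - e^a) dy` with `s = -2πiξ`, and
`-2π(2πξ² + iξ) = s(s+1)`. Multiplied by `s(s+1)`, that integral is evaluated by the fundamental
theorem of calculus with the antiderivative `s e^{(1+s)y} - (1+s) e^a e^{sy}`, which avoids
dividing by `s` or `1 + s`.
-/

open MeasureTheory Complex Set

/-- `ψ(δ_a, ·)` away from `0`: only one of the two intervals is nonempty, according to the sign
of `a`. -/
noncomputable def diracExpTail (a : ℝ) : ℝ → ℝ :=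
  (Ioc a 0).indicator (fun y => Real.exp y - Real.exp a) -
    (Ioc 0 a).indicator (fun y => Real.exp y - Real.exp a)

lemma diracExpTail_of_neg {a y : ℝ} (hy : y < 0) :
    diracExpTail a y = if a ≤ y then Real.exp y - Real.exp a else 0 := by
  rcases eq_or_ne a y with rfl | hay
  · simp [diracExpTail, hy.le]
  · simp [diracExpTail, indicator_apply, hy.le, not_lt.2 hy.le, hay.le_iff_lt]

lemma diracExpTail_of_pos {a y : ℝ} (hy : 0 < y) :
    diracExpTail a y = if y ≤ a then Real.exp a - Real.exp y else 0 := by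
  by_cases hya : y ≤ a <;> simp [diracExpTail, hy, not_le.2 hy, hya]

section

variable {E : Type*} [NormedAddCommGroup E] {f : ℝ → E} {a b : ℝ}

theorem IntervalIntegrable.integrable_indicator_Ioc_sub (hf : IntervalIntegrable f volume a b) :
    Integrable ((Ioc a b).indicator f - (Ioc b a).indicator f) :=
  ((integrable_indicator_iff measurableSet_Ioc).2 hf.1).sub
    ((integrable_indicator_iff measurableSet_Ioc).2 hf.2)

theorem integral_indicator_Ioc_sub [NormedSpace ℝ E] (hf : IntervalIntegrable f volume a b) :
    ∫ y, ((Ioc a b).indicator f - (Ioc b a).indicator f) y = ∫ y in a..b, f y := by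
  refine (integral_sub ((integrable_indicator_iff measurableSet_Ioc).2 hf.1)
    ((integrable_indicator_iff measurableSet_Ioc).2 hf.2)).trans ?_
  rw [integral_indicator measurableSet_Ioc, integral_indicator measurableSet_Ioc, intervalIntegral]

end

lemma cexp_mul_diracExpTail (s : ℂ) (a : ℝ) :
    (fun y : ℝ => cexp (s * y) * diracExpTail a y) =
      (Ioc a 0).indicator (fun y : ℝ => cexp (s * y) * (Real.exp y - Real.exp a)) -
        (Ioc 0 a).indicator (fun y : ℝ => cexp (s * y) * (Real.exp y - Real.exp a)) := by
  ext y
  simp only [diracExpTail, Pi.sub_apply, indicator_apply]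
  split_ifs <;> push_cast <;> ring

lemma integrable_cexp_mul_diracExpTail (s : ℂ) (a : ℝ) :
    Integrable (fun y : ℝ => cexp (s * y) * diracExpTail a y) := by
  rw [cexp_mul_diracExpTail]
  exact (Continuous.intervalIntegrable (by fun_prop) _ _).integrable_indicator_Ioc_sub

lemma hasDerivAt_cexp_mul_ofReal (c : ℂ) (t : ℝ) :
    HasDerivAt (fun y : ℝ => cexp (c * y)) (cexp (c * t) * c) t := by
  simpa using ((hasDerivAt_id t).ofReal_comp.const_mul c).cexp

lemma intervalIntegral_cexp_mul_exp_sub_exp_mul (s : ℂ) (a : ℝ) :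
    (∫ y in a..0, cexp (s * y) * (Real.exp y - Real.exp a)) * (s * (s + 1)) =
      cexp ((1 + s) * a) - (1 + s) * Real.exp a + s := by
  have hexp : ∀ t : ℝ, cexp (s * t) * Real.exp t = cexp ((1 + s) * t) := fun t => by
    rw [ofReal_exp, ← Complex.exp_add]; congr 1; ring
  have hderiv : ∀ t ∈ uIcc a 0, HasDerivAt
      (fun y : ℝ => s * cexp ((1 + s) * y) - (1 + s) * Real.exp a * cexp (s * y))
      (cexp (s * t) * (Real.exp t - Real.exp a) * (s * (s + 1))) t := fun t _ => by
    refine (((hasDerivAt_cexp_mul_ofReal (1 + s) t).const_mul s).sub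
      ((hasDerivAt_cexp_mul_ofReal s t).const_mul ((1 + s) * Real.exp a))).congr_deriv ?_
    rw [← hexp]; ring
  rw [← intervalIntegral.integral_mul_const, intervalIntegral.integral_eq_sub_of_hasDerivAt hderiv
    (Continuous.intervalIntegrable (by fun_prop) _ _), ← hexp a]
  simp only [ofReal_zero, mul_zero, Complex.exp_zero]
  ring

lemma integral_cexp_mul_diracExpTail (s : ℂ) (a : ℝ) :
    (∫ y : ℝ, cexp (s * y) * diracExpTail a y) * (s * (s + 1)) =
      cexp ((1 + s) * a) - (1 + s) * Real.exp a + s := by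
  rw [cexp_mul_diracExpTail, integral_indicator_Ioc_sub
    (Continuous.intervalIntegrable (by fun_prop) _ _), intervalIntegral_cexp_mul_exp_sub_exp_mul]

theorem exponential_tail_fourier_identity_general
    (x : ℕ → ℝ)
    (κ : ℕ → ℝ)
    (S : Finset ℕ)
    (ψ : ℝ → ℝ)
    (hψneg : ∀ xx : ℝ, xx < 0 →
      ψ xx = ∑ j ∈ S, if x j ≤ xx then κ j * (Real.exp xx - Real.exp (x j)) else 0)
    (hψpos : ∀ xx : ℝ, 0 < xx →
      ψ xx = ∑ j ∈ S, if xx ≤ x j then κ j * (Real.exp (x j) - Real.exp xx) else 0) :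
    ∀ ξ : ℝ,
      (∫ xx : ℝ, Complex.exp (-(2 * Real.pi * Complex.I * xx * ξ)) * (ψ xx : ℂ)) *
          ((-(2 * Real.pi)) * (2 * Real.pi * ξ ^ 2 + Complex.I * ξ)) =
        ∑ j ∈ S, (κ j : ℂ) *
          (Complex.exp ((1 - 2 * Real.pi * Complex.I * ξ) * (x j : ℂ)) -
            (1 - 2 * Real.pi * Complex.I * ξ) * Real.exp (x j) -
            2 * Real.pi * Complex.I * ξ) := by
  intro ξ
  set s : ℂ := -(2 * Real.pi * I * ξ) with hs
  have hψ : ∀ᵐ y : ℝ, ψ y = ∑ j ∈ S, κ j * diracExpTail (x j) y := by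
    filter_upwards [volume.ae_ne 0] with y hy0
    rcases hy0.lt_or_gt with hy | hy
    · simp only [hψneg y hy, diracExpTail_of_neg hy, mul_ite, mul_zero]
    · simp only [hψpos y hy, diracExpTail_of_pos hy, mul_ite, mul_zero]
  have hint : ∫ y : ℝ, cexp (-(2 * Real.pi * I * y * ξ)) * ψ y =
      ∑ j ∈ S, κ j * ∫ y : ℝ, cexp (s * y) * diracExpTail (x j) y := by
    have harg : ∀ y : ℝ, -(2 * Real.pi * I * y * ξ) = s * y := fun y => by rw [hs]; ring
    simp_rw [harg, ← integral_const_mul]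
    rw [← integral_finsetSum _ fun j _ => (integrable_cexp_mul_diracExpTail s (x j)).const_mul _]
    refine integral_congr_ae (hψ.mono fun y hy => ?_)
    simp only [hy, ofReal_sum, ofReal_mul, Finset.mul_sum]
    exact Finset.sum_congr rfl fun j _ => by ring
  have hmul : -(2 * (Real.pi : ℂ)) * (2 * Real.pi * ξ ^ 2 + I * ξ) = s * (s + 1) := by
    linear_combination (-4 * (Real.pi : ℂ) ^ 2 * ξ ^ 2) * I_sq
  have hshift : 1 - 2 * Real.pi * I * ξ = 1 + s := by rw [hs]; ring
  rw [hint, hmul, hshift, Finset.sum_mul]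
  refine Finset.sum_congr rfl fun j _ => ?_
  rw [mul_assoc, integral_cexp_mul_diracExpTail, hs]
  ring

/-- Fourier identity for the double exponential tail `ψ` of the purely atomic
Lévy measure `ν = Σ_{j≠M} κ^j δ_{x^j}`: for all `ξ`,
`(∫ e^{−2πixξ} ψ(ν,x) dx) · (−2π)(2πξ² + iξ)
  = Σ_{j≠M} κ^j (e^{(1−2πiξ)x^j} − (1−2πiξ)e^{x^j} − 2πiξ)`. -/
theorem exponential_tail_fourier_identity
    (N Mc : ℕ) (hN : Odd N) (hM : Mc = (N + 1) / 2) (dx : ℝ) (hdx : 0 < dx)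
    (x : ℕ → ℝ) (hx : ∀ j, x j = ((j : ℝ) - (Mc : ℝ)) * dx)
    (κ : ℕ → ℝ) (hκ : ∀ j, 0 ≤ κ j)
    (S : Finset ℕ) (hS : S = (Finset.Icc 1 N).erase Mc)
    (ψ : ℝ → ℝ)
    (hψneg : ∀ xx : ℝ, xx < 0 →
      ψ xx = ∑ j ∈ S, if x j ≤ xx then κ j * (Real.exp xx - Real.exp (x j)) else 0)
    (hψpos : ∀ xx : ℝ, 0 < xx →
      ψ xx = ∑ j ∈ S, if xx ≤ x j then κ j * (Real.exp (x j) - Real.exp xx) else 0)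
    (hψ0 : ψ 0 = 0)
    (hψint : Integrable ψ) :
    ∀ ξ : ℝ,
      (∫ xx : ℝ, Complex.exp (-(2 * Real.pi * Complex.I * xx * ξ)) * (ψ xx : ℂ)) *
          ((-(2 * Real.pi)) * (2 * Real.pi * ξ ^ 2 + Complex.I * ξ)) =
        ∑ j ∈ S, (κ j : ℂ) *
          (Complex.exp ((1 - 2 * Real.pi * Complex.I * ξ) * (x j : ℂ)) -
            (1 - 2 * Real.pi * Complex.I * ξ) * Real.exp (x j) -
            2 * Real.pi * Complex.I * ξ) :=
  exponential_tail_fourier_identity_general x κ S ψ hψneg hψpos
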